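/- arXiv:2006.12206 — 2 statements merged into one kernel-verified Lean document; each statement's English description precedes it below -/
import Mathlib

section
/- Let (λ_n)_{n∈ℕ} be a sequence of complex numbers with Im λ_n ≥ 0 for all n and ∑_{n} |λ_n| < ∞, and let B(z) := ∏_{n=1}^∞ (z − λ_n)/(z − conj(λ_n)) be the corresponding Blaschke product on the open upper half-plane. Then lim_{ξ→0⁺} ∫_0^π ξ · log |B(ξ e^{it})|^{-1} dt = 0. -/
/-!
Since `log |B|⁻¹ ≤ ∑ₙ log (|z - conj λₙ| / |z - λₙ|)` in `[0, ∞]` (even when the product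
diverges or vanishes), monotone convergence bounds the integral by the series of single-factor
integrals `∫₀^π ξ log |b_w(ξ e^{it})|⁻¹ dt`. The identity `|z - conj w|² = |z - w|² + 4 Im z Im w`
bounds such an integral by `2π ξ² |w| / (ξ - |w|)²`, which tends to `0` for fixed `w` and is
`O(|w|)` unless `ξ/2 ≤ |w| ≤ 2ξ`. In that range `|ξ e^{it} - w| ≥ ξ |t - arg w| / π`, so the
integrand has only an integrable logarithmic singularity and the integral is again `O(|w|)`.
Dominated convergence for series, with the summable majorant `6π² |λₙ|`, concludes.
-/

open Filter Topology MeasureTheory Real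
open scoped ComplexConjugate ENNReal

theorem norm_tprod_le_one {ι 𝕜 : Type*} [NormedField 𝕜] {f : ι → 𝕜} (hf : ∀ i, ‖f i‖ ≤ 1) :
    ‖∏' i, f i‖ ≤ 1 := by
  by_cases hmul : Multipliable f
  · rw [hmul.norm_tprod]
    exact tprod_le_of_prod_le' le_rfl fun s => Finset.prod_le_one (fun i _ => norm_nonneg _)
      fun i _ => hf i
  · simp [tprod_eq_one_of_not_multipliable hmul]

theorem ofReal_log_inv_norm_tprod_le {ι 𝕜 : Type*} [NormedField 𝕜] {f : ι → 𝕜}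
    (hf : ∀ i, ‖f i‖ ≤ 1) :
    ENNReal.ofReal (log ‖∏' i, f i‖⁻¹) ≤ ∑' i, ENNReal.ofReal (log ‖f i‖⁻¹) := by
  by_cases hmul : Multipliable f
  swap
  · simp [tprod_eq_one_of_not_multipliable hmul]
  rw [hmul.norm_tprod]
  by_cases hzero : ∃ i, f i = 0
  · obtain ⟨i, hi⟩ := hzero
    rw [tprod_of_exists_eq_zero ⟨i, by simp [hi]⟩]
    simp
  push Not at hzero
  have hpos (i : ι) : 0 < ‖f i‖ := norm_pos_iff.2 (hzero i)
  have hnonneg (i : ι) : 0 ≤ log ‖f i‖⁻¹ := by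
    rw [log_inv, neg_nonneg]; exact log_nonpos (norm_nonneg _) (hf i)
  by_cases hs : Summable fun i => log ‖f i‖⁻¹
  · have hs' : Summable fun i => log ‖f i‖ := by simpa [log_inv] using hs.neg
    rw [← ENNReal.ofReal_tsum_of_nonneg hnonneg hs, ← rexp_tsum_eq_tprod hpos hs']
    simp [log_inv, tsum_neg]
  · suffices ∑' i, ENNReal.ofReal (log ‖f i‖⁻¹) = ⊤ by rw [this]; exact le_top
    by_contra h
    exact hs ((ENNReal.summable_toReal h).congr fun i => ENNReal.toReal_ofReal (hnonneg i))

noncomputable def blaschkeFactor (w z : ℂ) : ℂ := (z - w) / (z - conj w)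

theorem norm_sub_conj_sq (z w : ℂ) : ‖z - conj w‖ ^ 2 = ‖z - w‖ ^ 2 + 4 * z.im * w.im := by
  simp only [← Complex.normSq_eq_norm_sq, Complex.normSq_apply, Complex.sub_re, Complex.sub_im,
    Complex.conj_re, Complex.conj_im]
  ring

section Blaschke

variable {z w : ℂ}

theorem norm_sub_le_norm_sub_conj (hz : 0 ≤ z.im) (hw : 0 ≤ w.im) : ‖z - w‖ ≤ ‖z - conj w‖ := by
  have := norm_sub_conj_sq z w
  have := mul_nonneg hz hw
  exact pow_le_pow_iff_left₀ (norm_nonneg _) (norm_nonneg _) two_ne_zero |>.1 (by nlinarith)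

theorem inv_norm_blaschkeFactor (w z : ℂ) : ‖blaschkeFactor w z‖⁻¹ = ‖z - conj w‖ / ‖z - w‖ := by
  rw [blaschkeFactor, norm_div, inv_div]

theorem norm_blaschkeFactor_le_one (hz : 0 ≤ z.im) (hw : 0 ≤ w.im) :
    ‖blaschkeFactor w z‖ ≤ 1 := by
  rw [blaschkeFactor, norm_div]
  exact div_le_one_of_le₀ (norm_sub_le_norm_sub_conj hz hw) (norm_nonneg _)

theorem log_inv_norm_blaschkeFactor_le (hz : 0 ≤ z.im) (hw : 0 ≤ w.im) :
    log ‖blaschkeFactor w z‖⁻¹ ≤ 2 * z.im * w.im / ‖z - w‖ ^ 2 := by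
  rw [inv_norm_blaschkeFactor]
  rcases (norm_nonneg (z - w)).eq_or_lt with ha | ha
  · simp [← ha]
  have hb := ha.trans_le (norm_sub_le_norm_sub_conj hz hw)
  -- `2 log (b / a) = log (b² / a²) ≤ b² / a² - 1`
  have := log_le_sub_one_of_pos (x := (‖z - conj w‖ / ‖z - w‖) ^ 2) (by positivity)
  rw [log_pow, div_pow, norm_sub_conj_sq] at this
  field_simp at this ⊢
  push_cast at this
  linarith

theorem log_inv_norm_blaschkeFactor_le_of_norm_ne (hz : 0 ≤ z.im) (hw : 0 ≤ w.im)
    (h : ‖z‖ ≠ ‖w‖) :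
    log ‖blaschkeFactor w z‖⁻¹ ≤ 2 * ‖z‖ * ‖w‖ / (‖z‖ - ‖w‖) ^ 2 := by
  have hd : 0 < (‖z‖ - ‖w‖) ^ 2 := by positivity [sub_ne_zero.2 h]
  have hsq : (‖z‖ - ‖w‖) ^ 2 ≤ ‖z - w‖ ^ 2 := by
    rw [← sq_abs]; exact pow_le_pow_left₀ (abs_nonneg _) (abs_norm_sub_norm_le z w) 2
  refine (log_inv_norm_blaschkeFactor_le hz hw).trans ?_
  gcongr
  · exact Complex.im_le_norm z
  · exact Complex.im_le_norm w

theorem log_inv_norm_blaschkeFactor_le_log_sub (hz : 0 ≤ z.im) (hw : 0 ≤ w.im) (h : z ≠ w) :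
    log ‖blaschkeFactor w z‖⁻¹ ≤ log (‖z‖ + ‖w‖) - log ‖z - w‖ := by
  have ha : 0 < ‖z - w‖ := norm_pos_iff.2 (sub_ne_zero.2 h)
  rw [inv_norm_blaschkeFactor, log_div (ha.trans_le (norm_sub_le_norm_sub_conj hz hw)).ne' ha.ne']
  gcongr
  · exact ha.trans_le (norm_sub_le_norm_sub_conj hz hw)
  · simpa using norm_sub_le z (conj w)

end Blaschke

noncomputable def arcPoint (ξ t : ℝ) : ℂ := ξ * Complex.exp (Complex.I * t)

section Arc

variable {ξ t : ℝ}

theorem arcPoint_eq (ξ t : ℝ) : arcPoint ξ t = ⟨ξ * cos t, ξ * sin t⟩ := by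
  apply Complex.ext <;>
    simp [arcPoint, mul_comm Complex.I, Complex.exp_mul_I, ← Complex.ofReal_cos,
      ← Complex.ofReal_sin]

theorem norm_arcPoint (hξ : 0 ≤ ξ) (t : ℝ) : ‖arcPoint ξ t‖ = ξ := by
  simp [arcPoint, mul_comm Complex.I, Complex.norm_exp_ofReal_mul_I, abs_of_nonneg hξ]

theorem im_arcPoint_nonneg (hξ : 0 ≤ ξ) (ht₀ : 0 ≤ t) (htπ : t ≤ π) :
    0 ≤ (arcPoint ξ t).im := by
  rw [arcPoint_eq]; exact mul_nonneg hξ (sin_nonneg_of_nonneg_of_le_pi ht₀ htπ)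

theorem norm_arcPoint_sub_sq (ξ t : ℝ) (w : ℂ) :
    ‖arcPoint ξ t - w‖ ^ 2 = ξ ^ 2 + ‖w‖ ^ 2 - 2 * ξ * ‖w‖ * cos (t - w.arg) := by
  rw [← Complex.normSq_eq_norm_sq, Complex.normSq_apply, arcPoint_eq, cos_sub]
  have hre := Complex.norm_mul_cos_arg w
  have him := Complex.norm_mul_sin_arg w
  simp only [Complex.sub_re, Complex.sub_im]
  rw [← hre, ← him]
  nlinarith [sin_sq_add_cos_sq t, sin_sq_add_cos_sq w.arg]

theorem mul_abs_sub_arg_le_norm_arcPoint_sub (hξ : 0 ≤ ξ) (ht₀ : 0 ≤ t) (htπ : t ≤ π) {w : ℂ}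
    (hw : 0 ≤ w.im) (hξw : ξ ≤ 2 * ‖w‖) : ξ * |t - w.arg| / π ≤ ‖arcPoint ξ t - w‖ := by
  have hθ₀ : 0 ≤ w.arg := Complex.arg_nonneg_iff.2 hw
  have hcos := cos_le_one_sub_mul_cos_sq (x := t - w.arg)
    (abs_le.2 ⟨by linarith [Complex.arg_le_pi w], by linarith⟩)
  have hπ := pi_pos
  have hcos' : π ^ 2 * cos (t - w.arg) ≤ π ^ 2 - 2 * (t - w.arg) ^ 2 := by
    have := mul_le_mul_of_nonneg_left hcos (sq_nonneg π)
    rwa [mul_sub, mul_one, ← mul_assoc, mul_div_cancel₀ _ (by positivity)] at this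
  refine abs_le_of_sq_le_sq' ?_ (norm_nonneg _) |>.2
  rw [norm_arcPoint_sub_sq, div_pow, mul_pow, sq_abs, div_le_iff₀ (by positivity)]
  nlinarith [sq_nonneg (ξ - ‖w‖),
    mul_le_mul_of_nonneg_left hcos' (by positivity : 0 ≤ 2 * ξ * ‖w‖),
    mul_nonneg (mul_nonneg hξ (by linarith : 0 ≤ 2 * ‖w‖ - ξ)) (sq_nonneg (t - w.arg))]

end Arc

theorem neg_two_le_integral_log_abs_sub {a θ : ℝ} (hθ : 0 ≤ θ) (hθa : θ ≤ a) :
    -2 ≤ ∫ t in (0)..a, log |t - θ| := by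
  simp only [log_abs]
  rw [intervalIntegral.integral_comp_sub_right (fun t => log t), integral_log, zero_sub,
    log_neg_eq_log]
  nlinarith [self_sub_one_le_mul_log hθ, self_sub_one_le_mul_log (sub_nonneg.2 hθa)]

theorem ofReal_integral_le_lintegral_ofReal {α : Type*} [MeasurableSpace α] {μ : Measure α}
    {f : α → ℝ} (hf : 0 ≤ᵐ[μ] f) :
    ENNReal.ofReal (∫ x, f x ∂μ) ≤ ∫⁻ x, ENNReal.ofReal (f x) ∂μ := by
  by_cases hint : Integrable f μ
  · exact (ofReal_integral_eq_lintegral_ofReal hint hf).le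
  · simp [integral_undef hint]

noncomputable def arcIntegral (ξ : ℝ) (w : ℂ) : ℝ≥0∞ :=
  ∫⁻ t in Set.Ioc 0 π, ENNReal.ofReal (ξ * log ‖blaschkeFactor w (arcPoint ξ t)‖⁻¹)

section ArcIntegral

variable {ξ : ℝ} {w : ℂ}

theorem arcIntegral_le_of_ne (hξ : 0 ≤ ξ) (hw : 0 ≤ w.im) (h : ξ ≠ ‖w‖) :
    arcIntegral ξ w ≤ ENNReal.ofReal (2 * π * ξ ^ 2 * ‖w‖ / (ξ - ‖w‖) ^ 2) := by
  have hpt : ∀ t ∈ Set.Ioc 0 π, ENNReal.ofReal (ξ * log ‖blaschkeFactor w (arcPoint ξ t)‖⁻¹)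
      ≤ ENNReal.ofReal (2 * ξ ^ 2 * ‖w‖ / (ξ - ‖w‖) ^ 2) := fun t ht => by
    refine ENNReal.ofReal_le_ofReal ?_
    have := log_inv_norm_blaschkeFactor_le_of_norm_ne (im_arcPoint_nonneg hξ ht.1.le ht.2) hw
      (by rwa [norm_arcPoint hξ])
    rw [norm_arcPoint hξ] at this
    calc ξ * log ‖blaschkeFactor w (arcPoint ξ t)‖⁻¹ ≤ ξ * (2 * ξ * ‖w‖ / (ξ - ‖w‖) ^ 2) := by
          gcongr
      _ = 2 * ξ ^ 2 * ‖w‖ / (ξ - ‖w‖) ^ 2 := by ring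
  calc arcIntegral ξ w ≤ ∫⁻ _ in Set.Ioc 0 π, ENNReal.ofReal (2 * ξ ^ 2 * ‖w‖ / (ξ - ‖w‖) ^ 2) :=
        setLIntegral_mono measurable_const hpt
    _ = ENNReal.ofReal (2 * π * ξ ^ 2 * ‖w‖ / (ξ - ‖w‖) ^ 2) := by
        rw [setLIntegral_const, Real.volume_Ioc, sub_zero, ← ENNReal.ofReal_mul (by positivity)]
        ring_nf

theorem arcIntegral_le_of_le_two_mul (hξ : 0 < ξ) (hw : 0 ≤ w.im) (h₁ : ξ ≤ 2 * ‖w‖)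
    (h₂ : ‖w‖ ≤ 2 * ξ) : arcIntegral ξ w ≤ ENNReal.ofReal (6 * π ^ 2 * ‖w‖) := by
  set θ := w.arg
  have hθ₀ : 0 ≤ θ := Complex.arg_nonneg_iff.2 hw
  have hθπ : θ ≤ π := Complex.arg_le_pi w
  -- `‖z - conj w‖ ≤ ξ + ‖w‖ ≤ 3ξ` and `‖z - w‖ ≥ ξ |t - θ| / π`
  set H : ℝ → ℝ := fun t => ξ * (log (3 * π) - log |t - θ|)
  have hH : ∀ᵐ t ∂volume.restrict (Set.Ioc 0 π),
      ENNReal.ofReal (ξ * log ‖blaschkeFactor w (arcPoint ξ t)‖⁻¹) ≤ ENNReal.ofReal (H t) := by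
    rw [ae_restrict_iff' measurableSet_Ioc]
    filter_upwards [measure_eq_zero_iff_ae_notMem.1 (measure_singleton θ)] with t htθ ht
    refine ENNReal.ofReal_le_ofReal (mul_le_mul_of_nonneg_left ?_ hξ.le)
    have hd : 0 < |t - θ| := abs_pos.2 (sub_ne_zero.2 htθ)
    have hdist := mul_abs_sub_arg_le_norm_arcPoint_sub hξ.le ht.1.le ht.2 hw h₁
    have hne : arcPoint ξ t ≠ w := fun h => by
      rw [h, sub_self, norm_zero] at hdist
      exact (div_pos (mul_pos hξ hd) pi_pos).not_ge hdist
    refine (log_inv_norm_blaschkeFactor_le_log_sub (im_arcPoint_nonneg hξ.le ht.1.le ht.2) hw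
      hne).trans ?_
    rw [norm_arcPoint hξ.le]
    have h3 : log (ξ + ‖w‖) ≤ log (3 * ξ) := log_le_log (by positivity) (by linarith)
    have h4 : log (ξ * |t - θ| / π) ≤ log ‖arcPoint ξ t - w‖ := log_le_log (by positivity) hdist
    rw [log_div (by positivity) pi_pos.ne', log_mul hξ.ne' hd.ne'] at h4
    rw [log_mul (by norm_num) hξ.ne'] at h3
    rw [log_mul (by norm_num) pi_pos.ne']
    linarith
  have hH_nonneg : 0 ≤ᵐ[volume.restrict (Set.Ioc 0 π)] H := by
    rw [EventuallyLE, ae_restrict_iff' measurableSet_Ioc]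
    refine Eventually.of_forall fun t ht => mul_nonneg hξ.le (sub_nonneg.2 ?_)
    rcases (abs_nonneg (t - θ)).eq_or_lt with h0 | h0
    · rw [← h0, log_zero]; exact log_nonneg (by nlinarith [pi_gt_three])
    · exact log_le_log h0 (by rw [abs_le] at *; constructor <;> nlinarith [ht.1, ht.2, pi_pos])
  have hlog : IntervalIntegrable (fun t => log |t - θ|) volume 0 π := by
    simpa [log_abs] using
      (intervalIntegral.intervalIntegrable_log' (a := -θ) (b := π - θ)).comp_sub_right θ
  have hH_int : IntervalIntegrable H volume 0 π := (intervalIntegrable_const.sub hlog).const_mul ξ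
  have hH_le : ∫ t in (0)..π, H t ≤ 6 * π ^ 2 * ‖w‖ := by
    rw [intervalIntegral.integral_const_mul,
      intervalIntegral.integral_sub intervalIntegrable_const hlog, intervalIntegral.integral_const,
      sub_zero, smul_eq_mul]
    have hI := neg_two_le_integral_log_abs_sub hθ₀ hθπ
    have hlog3 := log_le_sub_one_of_pos (x := 3 * π) (by positivity)
    have hπ := pi_gt_three
    calc ξ * (π * log (3 * π) - ∫ t in (0)..π, log |t - θ|) ≤ ξ * (π * (3 * π - 1) + 2) := by
          gcongr; nlinarith
      _ ≤ 2 * ‖w‖ * (π * (3 * π - 1) + 2) := by gcongr; nlinarith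
      _ ≤ 6 * π ^ 2 * ‖w‖ := by nlinarith [norm_nonneg w]
  calc arcIntegral ξ w ≤ ∫⁻ t in Set.Ioc 0 π, ENNReal.ofReal (H t) := lintegral_mono_ae hH
    _ = ENNReal.ofReal (∫ t in (0)..π, H t) := by
        rw [intervalIntegral.integral_of_le pi_pos.le,
          ofReal_integral_eq_lintegral_ofReal hH_int.1 hH_nonneg]
    _ ≤ ENNReal.ofReal (6 * π ^ 2 * ‖w‖) := ENNReal.ofReal_le_ofReal hH_le

theorem arcIntegral_le (hξ : 0 < ξ) (hw : 0 ≤ w.im) :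
    arcIntegral ξ w ≤ ENNReal.ofReal (6 * π ^ 2 * ‖w‖) := by
  by_cases hnear : ξ ≤ 2 * ‖w‖ ∧ ‖w‖ ≤ 2 * ξ
  · exact arcIntegral_le_of_le_two_mul hξ hw hnear.1 hnear.2
  have hsep : ξ ^ 2 ≤ 4 * (ξ - ‖w‖) ^ 2 := by
    rcases not_and_or.1 hnear with h | h <;> push Not at h <;> nlinarith [norm_nonneg w]
  have hne : ξ ≠ ‖w‖ := fun h => by nlinarith
  refine (arcIntegral_le_of_ne hξ.le hw hne).trans (ENNReal.ofReal_le_ofReal ?_)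
  rw [div_le_iff₀ (by positivity [sub_ne_zero.2 hne])]
  have hπ := pi_gt_three
  nlinarith [mul_le_mul_of_nonneg_left hsep (by positivity : 0 ≤ 2 * π * ‖w‖),
    mul_nonneg (mul_nonneg (by nlinarith : 0 ≤ 6 * π ^ 2 - 8 * π) (norm_nonneg w))
      (sq_nonneg (ξ - ‖w‖))]

theorem tendsto_toReal_arcIntegral (hw : 0 ≤ w.im) :
    Tendsto (fun ξ => (arcIntegral ξ w).toReal) (𝓝[>] 0) (𝓝 0) := by
  rcases (norm_nonneg w).eq_or_lt with h0 | hpos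
  · refine tendsto_const_nhds.congr' ?_
    filter_upwards [self_mem_nhdsWithin] with ξ hξ
    have := arcIntegral_le hξ hw
    rw [← h0, mul_zero, ENNReal.ofReal_zero, nonpos_iff_eq_zero] at this
    simp [this]
  have hlim : Tendsto (fun ξ : ℝ => 2 * π * ξ ^ 2 * ‖w‖ / (ξ - ‖w‖) ^ 2) (𝓝[>] 0) (𝓝 0) := by
    have : ContinuousAt (fun ξ : ℝ => 2 * π * ξ ^ 2 * ‖w‖ / (ξ - ‖w‖) ^ 2) 0 :=
      by fun_prop (disch := simp [hpos.ne'])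
    simpa using this.tendsto.mono_left nhdsWithin_le_nhds
  refine tendsto_of_tendsto_of_tendsto_of_le_of_le' tendsto_const_nhds hlim
    (Eventually.of_forall fun _ => ENNReal.toReal_nonneg) ?_
  filter_upwards [Ioo_mem_nhdsGT hpos] with ξ hξ
  exact ENNReal.toReal_le_of_le_ofReal (by positivity) (arcIntegral_le_of_ne hξ.1.le hw hξ.2.ne)

end ArcIntegral

section BlaschkeProduct

variable {ι : Type*} {lam : ι → ℂ}

theorem log_inv_norm_tprod_blaschkeFactor_nonneg (him : ∀ i, 0 ≤ (lam i).im) {z : ℂ}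
    (hz : 0 ≤ z.im) : 0 ≤ log ‖∏' i, blaschkeFactor (lam i) z‖⁻¹ := by
  rw [log_inv, neg_nonneg]
  exact log_nonpos (norm_nonneg _)
    (norm_tprod_le_one fun i => norm_blaschkeFactor_le_one hz (him i))

theorem tendsto_tsum_toReal_arcIntegral (him : ∀ i, 0 ≤ (lam i).im)
    (hsum : Summable fun i => ‖lam i‖) :
    Tendsto (fun ξ => ∑' i, (arcIntegral ξ (lam i)).toReal) (𝓝[>] 0) (𝓝 0) := by
  simpa using tendsto_tsum_of_dominated_convergence (hsum.mul_left (6 * π ^ 2))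
    (fun i => tendsto_toReal_arcIntegral (him i)) (by
      filter_upwards [self_mem_nhdsWithin] with ξ hξ i
      rw [Real.norm_of_nonneg ENNReal.toReal_nonneg]
      exact ENNReal.toReal_le_of_le_ofReal (by positivity) (arcIntegral_le hξ (him i)))

theorem integral_le_tsum_toReal_arcIntegral [Countable ι] (him : ∀ i, 0 ≤ (lam i).im)
    (hsum : Summable fun i => ‖lam i‖) {ξ : ℝ} (hξ : 0 < ξ) :
    ∫ t in (0)..π, ξ * log ‖∏' i, blaschkeFactor (lam i) (arcPoint ξ t)‖⁻¹
      ≤ ∑' i, (arcIntegral ξ (lam i)).toReal := by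
  have hbound (i : ι) : arcIntegral ξ (lam i) ≤ ENNReal.ofReal (6 * π ^ 2 * ‖lam i‖) :=
    arcIntegral_le hξ (him i)
  have hsummable : Summable fun i => (arcIntegral ξ (lam i)).toReal :=
    Summable.of_nonneg_of_le (fun _ => ENNReal.toReal_nonneg)
      (fun i => ENNReal.toReal_le_of_le_ofReal (by positivity) (hbound i)) (hsum.mul_left _)
  rw [intervalIntegral.integral_of_le pi_pos.le,
    ← ENNReal.ofReal_le_ofReal_iff (tsum_nonneg fun _ => ENNReal.toReal_nonneg),
    ENNReal.ofReal_tsum_of_nonneg (fun _ => ENNReal.toReal_nonneg) hsummable]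
  simp_rw [ENNReal.ofReal_toReal (ne_top_of_le_ne_top ENNReal.ofReal_ne_top (hbound _))]
  have hz {t : ℝ} (ht : t ∈ Set.Ioc 0 π) : 0 ≤ (arcPoint ξ t).im :=
    im_arcPoint_nonneg hξ.le ht.1.le ht.2
  calc ENNReal.ofReal
        (∫ t in Set.Ioc 0 π, ξ * log ‖∏' i, blaschkeFactor (lam i) (arcPoint ξ t)‖⁻¹)
      ≤ ∫⁻ t in Set.Ioc 0 π,
          ENNReal.ofReal (ξ * log ‖∏' i, blaschkeFactor (lam i) (arcPoint ξ t)‖⁻¹) := by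
        refine ofReal_integral_le_lintegral_ofReal ((ae_restrict_iff' measurableSet_Ioc).2
          (Eventually.of_forall fun t ht => ?_))
        exact mul_nonneg hξ.le (log_inv_norm_tprod_blaschkeFactor_nonneg him (hz ht))
    _ ≤ ∫⁻ t in Set.Ioc 0 π, ∑' i,
          ENNReal.ofReal (ξ * log ‖blaschkeFactor (lam i) (arcPoint ξ t)‖⁻¹) := by
        refine setLIntegral_mono' measurableSet_Ioc fun t ht => ?_
        simp_rw [ENNReal.ofReal_mul hξ.le, ENNReal.tsum_mul_left]
        gcongr
        exact ofReal_log_inv_norm_tprod_le fun i => norm_blaschkeFactor_le_one (hz ht) (him i)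
    _ = ∑' i, arcIntegral ξ (lam i) :=
        lintegral_tsum fun i => by unfold blaschkeFactor arcPoint; fun_prop

end BlaschkeProduct

theorem blaschke_product_radial_limit (lam : ℕ → ℂ) (him : ∀ n, 0 ≤ (lam n).im)
    (hsum : Summable fun n => ‖lam n‖) :
    Tendsto (fun ξ : ℝ =>
        ∫ t in (0:ℝ)..Real.pi, ξ * Real.log (‖          (∏' n, ((ξ : ℂ) * Complex.exp (Complex.I * t) - lam n) /
            ((ξ : ℂ) * Complex.exp (Complex.I * t) - starRingEnd ℂ (lam n)))‖⁻¹))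
      (nhdsWithin 0 (Set.Ioi 0)) (nhds 0) := by
  refine tendsto_of_tendsto_of_tendsto_of_le_of_le' tendsto_const_nhds
    (tendsto_tsum_toReal_arcIntegral him hsum) ?_ ?_
  · filter_upwards [self_mem_nhdsWithin] with ξ (hξ : 0 < ξ)
    refine intervalIntegral.integral_nonneg pi_pos.le fun t ht => mul_nonneg hξ.le ?_
    exact log_inv_norm_tprod_blaschkeFactor_nonneg him (im_arcPoint_nonneg hξ.le ht.1 ht.2)
  · filter_upwards [self_mem_nhdsWithin] with ξ hξ
    exact integral_le_tsum_toReal_arcIntegral him hsum hξ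
end

section
/- Let (f_n)_{n∈ℕ} be a sequence of nonnegative functions in L¹(ℝ) converging almost everywhere to f ∈ L¹(ℝ). Assume that the limit L := lim_{n→∞} ∫_ℝ f_n exists and is finite, and that for every ε > 0 one has ∫_{|x|≥ε} |f_n(x) − f(x)| dx → 0 as n → ∞. Then γ := L − ∫_ℝ f is nonnegative, and for every z ∈ ℂ with Im z > 0, lim_{n→∞} ∫_ℝ f_n(x)/(z − x) dx = γ/z + ∫_ℝ f(x)/(z − x) dx. -/
/-!
Fatou's lemma gives `∫ f ≤ L`. For the limit put `gₙ = fₙ - f`: then `∫ gₙ → γ`, the `L¹` norms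
of `gₙ` stay bounded and the mass of `gₙ` away from `0` tends to zero, so `gₙ dx → γ δ₀` when tested
against any bounded function continuous at `0`. The Cauchy kernel `x ↦ (z - x)⁻¹` is such a
function (it is bounded by `1 / Im z`), and its value at `0` is `1 / z`.
-/

open MeasureTheory Filter Topology Set

theorem integral_le_of_tendsto_integral_of_ae_tendsto {α ι : Type*} [MeasurableSpace α]
    {μ : Measure α} {u : Filter ι} [u.NeBot] [u.IsCountablyGenerated]
    {F : ι → α → ℝ} {f : α → ℝ} {L : ℝ}
    (hF_nonneg : ∀ i, 0 ≤ F i) (hF : ∀ i, Integrable (F i) μ) (hf : Integrable f μ)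
    (hFf : ∀ᵐ x ∂μ, Tendsto (fun i => F i x) u (𝓝 (f x)))
    (hFL : Tendsto (fun i => ∫ x, F i x ∂μ) u (𝓝 L)) :
    ∫ x, f x ∂μ ≤ L := by
  have hf_nonneg : 0 ≤ᵐ[μ] f := by
    filter_upwards [hFf] with x hx
    exact ge_of_tendsto' hx fun i => hF_nonneg i x
  have hL_nonneg : 0 ≤ L :=
    ge_of_tendsto' hFL fun i => integral_nonneg (hF_nonneg i)
  rw [← ENNReal.ofReal_le_ofReal_iff hL_nonneg, ofReal_integral_eq_lintegral_ofReal hf hf_nonneg]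
  calc ∫⁻ x, ENNReal.ofReal (f x) ∂μ
      = ∫⁻ x, liminf (fun i => ENNReal.ofReal (F i x)) u ∂μ := by
        refine lintegral_congr_ae ?_
        filter_upwards [hFf] with x hx
        exact ((ENNReal.continuous_ofReal.tendsto _).comp hx).liminf_eq.symm
    _ ≤ liminf (fun i => ∫⁻ x, ENNReal.ofReal (F i x) ∂μ) u :=
        lintegral_liminf_le' fun i => (hF i).aemeasurable.ennreal_ofReal
    _ = ENNReal.ofReal L := by
        simp_rw [← ofReal_integral_eq_lintegral_ofReal (hF _) (.of_forall (hF_nonneg _))]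
        exact ((ENNReal.continuous_ofReal.tendsto _).comp hFL).liminf_eq

section Concentration

variable {X E : Type*} [PseudoMetricSpace X] [MeasurableSpace X] [OpensMeasurableSpace X]
  {μ : Measure X} [NormedAddCommGroup E] [NormedSpace ℝ E]

theorem norm_integral_smul_sub_le {g : X → ℝ} {φ : X → E} {x₀ : X} {C ε η : ℝ}
    (hg : Integrable g μ) (hC : ∀ x, ‖φ x‖ ≤ C) (hη : 0 ≤ η)
    (hφη : ∀ x, dist x x₀ < ε → ‖φ x - φ x₀‖ ≤ η) :
    ‖∫ x, g x • (φ x - φ x₀) ∂μ‖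
      ≤ 2 * C * ∫ x in {x | ε ≤ dist x x₀}, |g x| ∂μ + η * ∫ x, |g x| ∂μ := by
  set s := {x | ε ≤ dist x x₀}
  have hs : MeasurableSet s :=
    (isClosed_le continuous_const (continuous_id.dist continuous_const)).measurableSet
  have hφ_far : ∀ x, ‖φ x - φ x₀‖ ≤ 2 * C := fun x => by
    linarith [norm_sub_le (φ x) (φ x₀), hC x, hC x₀]
  have hpt : ∀ x, ‖g x • (φ x - φ x₀)‖ ≤ 2 * C * s.indicator (fun x => |g x|) x + η * |g x| := by
    intro x
    rw [norm_smul, Real.norm_eq_abs, mul_comm]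
    by_cases hx : x ∈ s
    · rw [indicator_of_mem hx]
      nlinarith [hφ_far x, abs_nonneg (g x)]
    · rw [indicator_of_notMem hx]
      nlinarith [hφη x (not_le.1 hx), abs_nonneg (g x)]
  calc ‖∫ x, g x • (φ x - φ x₀) ∂μ‖ ≤ ∫ x, ‖g x • (φ x - φ x₀)‖ ∂μ :=
        norm_integral_le_integral_norm _
    _ ≤ ∫ x, 2 * C * s.indicator (fun x => |g x|) x + η * |g x| ∂μ :=
        integral_mono_of_nonneg (.of_forall fun _ => norm_nonneg _)
          (((hg.abs.indicator hs).const_mul _).add (hg.abs.const_mul _)) (.of_forall hpt)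
    _ = _ := by
        rw [integral_add ((hg.abs.indicator hs).const_mul _) (hg.abs.const_mul _),
          integral_const_mul, integral_const_mul, integral_indicator hs]

theorem tendsto_integral_smul_sub_of_concentrating {g : ℕ → X → ℝ} {φ : X → E} {x₀ : X} {C : ℝ}
    (hg : ∀ n, Integrable (g n) μ) (hC : ∀ x, ‖φ x‖ ≤ C) (hφx₀ : ContinuousAt φ x₀)
    (hbdd : IsBoundedUnder (· ≤ ·) atTop fun n => ∫ x, |g n x| ∂μ)
    (hconc : ∀ ε > 0, Tendsto (fun n => ∫ x in {x | ε ≤ dist x x₀}, |g n x| ∂μ) atTop (𝓝 0)) :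
    Tendsto (fun n => ∫ x, g n x • (φ x - φ x₀) ∂μ) atTop (𝓝 0) := by
  obtain ⟨B, hB⟩ := hbdd
  rw [Metric.tendsto_nhds]
  intro δ hδ
  obtain ⟨η, hη, hBη⟩ := exists_pos_mul_lt (half_pos hδ) B
  obtain ⟨ε, hε, hφη⟩ := Metric.continuousAt_iff.1 hφx₀ η hη
  have hfar : ∀ᶠ n in atTop, 2 * C * ∫ x in {x | ε ≤ dist x x₀}, |g n x| ∂μ < δ / 2 := by
    refine (hconc ε hε).const_mul (2 * C) |>.eventually_lt_const ?_
    simpa using half_pos hδ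
  filter_upwards [hfar, eventually_map.1 hB] with n hn_far hn_bdd
  rw [dist_zero_right]
  calc _ ≤ 2 * C * ∫ x in {x | ε ≤ dist x x₀}, |g n x| ∂μ + η * ∫ x, |g n x| ∂μ :=
        norm_integral_smul_sub_le (hg n) hC hη.le fun x hx =>
          (dist_eq_norm (φ x) (φ x₀) ▸ hφη hx).le
    _ < δ / 2 + δ / 2 := by gcongr; nlinarith
    _ = δ := add_halves δ

theorem tendsto_integral_smul_of_concentrating [CompleteSpace E] {g : ℕ → X → ℝ} {φ : X → E}
    {x₀ : X} {C γ : ℝ}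
    (hg : ∀ n, Integrable (g n) μ) (hφ : AEStronglyMeasurable φ μ) (hC : ∀ x, ‖φ x‖ ≤ C)
    (hφx₀ : ContinuousAt φ x₀)
    (hγ : Tendsto (fun n => ∫ x, g n x ∂μ) atTop (𝓝 γ))
    (hbdd : IsBoundedUnder (· ≤ ·) atTop fun n => ∫ x, |g n x| ∂μ)
    (hconc : ∀ ε > 0, Tendsto (fun n => ∫ x in {x | ε ≤ dist x x₀}, |g n x| ∂μ) atTop (𝓝 0)) :
    Tendsto (fun n => ∫ x, g n x • φ x ∂μ) atTop (𝓝 (γ • φ x₀)) := by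
  have hsplit : ∀ n, ∫ x, g n x • φ x ∂μ
      = ∫ x, g n x • (φ x - φ x₀) ∂μ + (∫ x, g n x ∂μ) • φ x₀ := fun n => by
    have hφ' : MemLp φ ⊤ μ := memLp_top_of_bound hφ C (.of_forall hC)
    rw [← integral_smul_const, ← integral_add]
    · simp [smul_sub]
    · exact (hg n).smul_of_top_left (hφ'.sub (memLp_top_const _))
    · exact (hg n).smul_const _
  simp_rw [hsplit]
  simpa using (tendsto_integral_smul_sub_of_concentrating hg hC hφx₀ hbdd hconc).add
    (hγ.smul_const (φ x₀))

end Concentration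

theorem isBoundedUnder_integral_abs_sub {α ι : Type*} [MeasurableSpace α] {μ : Measure α}
    {u : Filter ι} {F : ι → α → ℝ} {f : α → ℝ} {L : ℝ}
    (hF_nonneg : ∀ i, 0 ≤ F i) (hF : ∀ i, Integrable (F i) μ) (hf : Integrable f μ)
    (hFL : Tendsto (fun i => ∫ x, F i x ∂μ) u (𝓝 L)) :
    IsBoundedUnder (· ≤ ·) u fun i => ∫ x, |F i x - f x| ∂μ := by
  refine (hFL.add_const (∫ x, |f x| ∂μ)).isBoundedUnder_le.mono_le (.of_forall fun i => ?_)
  dsimp only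
  rw [← integral_add (hF i) hf.abs]
  refine integral_mono ((hF i).sub hf).abs ((hF i).add hf.abs) fun x => ?_
  simpa [abs_of_nonneg (hF_nonneg i x)] using abs_sub (F i x) (f x)

namespace Complex

theorem im_le_norm_sub_ofReal (z : ℂ) (x : ℝ) : z.im ≤ ‖z - x‖ := by
  simpa using (le_abs_self _).trans (abs_im_le_norm (z - x))

theorem norm_inv_sub_ofReal_le {z : ℂ} (hz : 0 < z.im) (x : ℝ) : ‖(z - x)⁻¹‖ ≤ z.im⁻¹ := by
  rw [norm_inv]
  exact inv_anti₀ hz (im_le_norm_sub_ofReal z x)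

theorem continuous_inv_sub_ofReal {z : ℂ} (hz : 0 < z.im) : Continuous fun x : ℝ => (z - x)⁻¹ :=
  (continuous_const.sub continuous_ofReal).inv₀ fun x =>
    norm_pos_iff.1 (hz.trans_le (im_le_norm_sub_ofReal z x))

end Complex

theorem cauchy_integral_limit (fn : ℕ → ℝ → ℝ) (f : ℝ → ℝ) (L : ℝ)
    (hnn : ∀ n x, 0 ≤ fn n x)
    (hint : ∀ n, Integrable (fn n)) (hf : Integrable f)
    (hae : ∀ᵐ x ∂(volume : Measure ℝ), Tendsto (fun n => fn n x) atTop (nhds (f x)))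
    (hL : Tendsto (fun n => ∫ x, fn n x) atTop (nhds L))
    (hloc : ∀ ε > (0 : ℝ),
      Tendsto (fun n => ∫ x in {x : ℝ | ε ≤ |x|}, |fn n x - f x|) atTop (nhds 0)) :
    0 ≤ L - ∫ x, f x ∧
    ∀ z : ℂ, 0 < z.im →
      Tendsto (fun n => ∫ x : ℝ, (fn n x : ℂ) / (z - x)) atTop
        (nhds (((L - ∫ x, f x : ℝ) : ℂ) / z + ∫ x : ℝ, (f x : ℂ) / (z - x))) := by
  refine ⟨sub_nonneg.2 (integral_le_of_tendsto_integral_of_ae_tendsto hnn hint hf hae hL),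
    fun z hz => ?_⟩
  have hφ := Complex.continuous_inv_sub_ofReal hz
  have hφC := Complex.norm_inv_sub_ofReal_le hz
  have hlim := tendsto_integral_smul_of_concentrating (g := fun n x => fn n x - f x) (x₀ := 0)
    (fun n => (hint n).sub hf) hφ.aestronglyMeasurable hφC hφ.continuousAt
    ((hL.sub_const _).congr fun n => (integral_sub (hint n) hf).symm)
    (isBoundedUnder_integral_abs_sub hnn hint hf hL) (by simpa using hloc)
  have hker : ∀ g : ℝ → ℝ, Integrable g → Integrable fun x : ℝ => g x • (z - x)⁻¹ :=
    fun g hg => hg.smul_of_top_left <|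
      memLp_top_of_bound hφ.aestronglyMeasurable _ (.of_forall hφC)
  have hsplit : ∀ n, ∫ x : ℝ, (fn n x : ℂ) / (z - x)
      = (∫ x, (fn n x - f x) • (z - x)⁻¹) + ∫ x, f x • (z - x)⁻¹ := fun n => by
    rw [← integral_add (hker (fun x => fn n x - f x) ((hint n).sub hf)) (hker _ hf)]
    simp [Complex.real_smul, div_eq_mul_inv, sub_mul]
  have htarget : ((L - ∫ x, f x : ℝ) : ℂ) / z + ∫ x : ℝ, (f x : ℂ) / (z - x)
      = (L - ∫ x, f x) • (z - (0 : ℝ))⁻¹ + ∫ x, f x • (z - x)⁻¹ := by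
    simp [Complex.real_smul, div_eq_mul_inv]
  rw [htarget]
  simp_rw [hsplit]
  exact hlim.add_const _
end
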